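/- arXiv:2505.10525 — 3 statements merged into one kernel-verified Lean document; each statement's English description precedes it below -/
import Mathlib

section
/- Let E_s = {m^{-s} : m ∈ ℕ, m ≥ 1} ∪ {0} ⊂ ℝ for s > 0. Then the Assouad dimension of E_s equals 1. -/
/-- `s` is an Assouad-dimension exponent bound for the metric space `X`:
there is `C > 0` such that every ball `B(x,R)` can be covered by at most
`C (R/r)^s` balls of radius `r`, for all `0 < r < R`. -/
def IsAssouadExponent (X : Type*) [MetricSpace X] (s : ℝ) : Prop :=
  ∃ C : ℝ, 0 < C ∧ ∀ (x : X) (R r : ℝ), 0 < r → r < R →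
    ∃ t : Finset X, (Metric.closedBall x R ⊆ ⋃ y ∈ t, Metric.closedBall y r) ∧
      (t.card : ℝ) ≤ C * (R / r) ^ s

/-- The Assouad dimension of a metric space. -/
noncomputable def assouadDim (X : Type*) [MetricSpace X] : ℝ :=
  sInf {s : ℝ | 0 < s ∧ IsAssouadExponent X s}

/-- The polynomially decaying sequence set `E_s = {m^{-s}} ∪ {0}`. -/
noncomputable def Eset (s : ℝ) : Set ℝ :=
  {x : ℝ | ∃ m : ℕ, 1 ≤ m ∧ x = (m : ℝ) ^ (-s)} ∪ {0}

/-! Every subset of `ℝ` has Assouad exponent `1`: a ball of radius `R` meets at most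
`2R/r + 2` of the intervals `[kr, (k+1)r)`, and one point of the set in each of them gives an
`r`-cover. Conversely, the ball of radius `m^{-s}` about `m^{-s}` contains the `m + 1` points
`k^{-s}`, `m ≤ k ≤ 2m`, which by the mean value theorem are `s(2m)^{-(s+1)}`-separated. At scale
`r = s(2m)^{-(s+1)}/3` they need `m + 1` balls, while `R/r = (3 · 2^{s+1}/s) m`, so
`C (R/r)^b = O(m^b)` is too small once `b < 1` and `m` is large. -/

open Metric Set Filter

lemma card_le_card_of_separated_of_mem_biUnion {X ι : Type*} [MetricSpace X] {p : ι → X}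
    {I : Finset ι} {t : Finset X} {r : ℝ}
    (hsep : ∀ i ∈ I, ∀ j ∈ I, i ≠ j → 2 * r < dist (p i) (p j))
    (hcov : ∀ i ∈ I, p i ∈ ⋃ y ∈ t, closedBall y r) : I.card ≤ t.card := by
  refine Finset.card_le_card_of_forall_subsingleton (fun i y => p i ∈ closedBall y r)
    (fun i hi => by simpa using hcov i hi) fun y _ i ⟨hi, hiy⟩ j ⟨hj, hjy⟩ => ?_
  by_contra hne
  linarith [hsep i hi j hj hne, dist_triangle_right (p i) (p j) y, mem_closedBall.1 hiy,
    mem_closedBall.1 hjy]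

lemma Int.card_Icc_floor_div_le {a b r : ℝ} (hr : 0 < r) (hab : a ≤ b) :
    ((Finset.Icc ⌊a / r⌋ ⌊b / r⌋).card : ℝ) ≤ (b - a) / r + 2 := by
  have hle : ⌊a / r⌋ ≤ ⌊b / r⌋ := Int.floor_mono (div_le_div_of_nonneg_right hab hr.le)
  rw [Int.card_Icc, ← Int.cast_natCast, Int.toNat_of_nonneg (by omega)]
  push_cast
  linarith [Int.floor_le (b / r), Int.lt_floor_add_one (a / r), sub_div b a r]

lemma exists_finset_closedBall_subset_biUnion (X : Set ℝ) (x : X) {R r : ℝ} (hR : 0 ≤ R)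
    (hr : 0 < r) : ∃ t : Finset X, closedBall x R ⊆ ⋃ y ∈ t, closedBall y r ∧
      (t.card : ℝ) ≤ 2 * R / r + 2 := by
  classical
  let cell (i : ℤ) : X := if h : ∃ y : X, ⌊(y : ℝ) / r⌋ = i then h.choose else x
  have floor_cell {z : X} : ⌊(cell ⌊(z : ℝ) / r⌋ : ℝ) / r⌋ = ⌊(z : ℝ) / r⌋ := by
    have h : ∃ y : X, ⌊(y : ℝ) / r⌋ = ⌊(z : ℝ) / r⌋ := ⟨z, rfl⟩
    simp only [cell, dif_pos h]
    exact h.choose_spec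
  refine ⟨(Finset.Icc ⌊((x : ℝ) - R) / r⌋ ⌊((x : ℝ) + R) / r⌋).image cell, ?_, ?_⟩
  · intro z hz
    rw [mem_closedBall, Subtype.dist_eq, Real.dist_eq, abs_le] at hz
    refine mem_iUnion₂.2 ⟨cell ⌊(z : ℝ) / r⌋, Finset.mem_image_of_mem _ ?_, ?_⟩
    · exact Finset.mem_Icc.2 ⟨Int.floor_mono (by gcongr; linarith),
        Int.floor_mono (by gcongr; linarith)⟩
    · have h := Int.abs_sub_lt_one_of_floor_eq_floor (floor_cell (z := z)).symm
      rw [← sub_div, abs_div, abs_of_pos hr, div_lt_one hr] at h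
      rw [mem_closedBall, Subtype.dist_eq, Real.dist_eq]
      exact h.le
  · calc _ ≤ ((Finset.Icc ⌊((x : ℝ) - R) / r⌋ ⌊((x : ℝ) + R) / r⌋).card : ℝ) := by
          exact_mod_cast Finset.card_image_le
      _ ≤ ((x : ℝ) + R - (x - R)) / r + 2 := Int.card_Icc_floor_div_le hr (by linarith)
      _ = 2 * R / r + 2 := by ring_nf

lemma isAssouadExponent_one (X : Set ℝ) : IsAssouadExponent X 1 := by
  refine ⟨4, by norm_num, fun x R r hr hrR => ?_⟩
  obtain ⟨t, ht, hcard⟩ := exists_finset_closedBall_subset_biUnion X x (hr.trans hrR).le hr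
  refine ⟨t, ht, hcard.trans ?_⟩
  have : 1 ≤ R / r := (one_le_div hr).2 hrR.le
  rw [Real.rpow_one, mul_div_assoc]
  linarith

lemma rpow_neg_sub_rpow_neg_ge {s x y : ℝ} (hs : 0 ≤ s) (hx : 0 < x) (hxy : x < y) :
    s * y ^ (-(s + 1)) * (y - x) ≤ x ^ (-s) - y ^ (-s) := by
  have hderiv : ∀ c ∈ Ioo x y, HasDerivAt (fun u : ℝ => u ^ (-s)) (-s * c ^ (-s - 1)) c :=
    fun c hc => Real.hasDerivAt_rpow_const (Or.inl (hx.trans hc.1).ne')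
  have hcont : ContinuousOn (fun u : ℝ => u ^ (-s)) (Icc x y) :=
    fun c hc => (Real.continuousAt_rpow_const _ _ (Or.inl (hx.trans_le hc.1).ne')).continuousWithinAt
  obtain ⟨c, hc, hslope⟩ := exists_hasDerivAt_eq_slope _ _ hxy hcont hderiv
  have hyx : 0 < y - x := sub_pos.2 hxy
  have hdiff : x ^ (-s) - y ^ (-s) = s * c ^ (-(s + 1)) * (y - x) := by
    rw [eq_div_iff hyx.ne'] at hslope
    rw [show -(s + 1) = -s - 1 by ring]
    linarith
  have hcy : y ^ (-(s + 1)) ≤ c ^ (-(s + 1)) :=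
    Real.rpow_le_rpow_of_nonpos (hx.trans hc.1) hc.2.le (by linarith)
  rw [hdiff]
  exact mul_le_mul_of_nonneg_right (mul_le_mul_of_nonneg_left hcy hs) hyx.le

lemma natCast_rpow_neg_sub_ge {s : ℝ} (hs : 0 ≤ s) {k j n : ℕ} (hk : 1 ≤ k) (hkj : k < j)
    (hjn : j ≤ n) : s * (n : ℝ) ^ (-(s + 1)) ≤ (k : ℝ) ^ (-s) - (j : ℝ) ^ (-s) := by
  have hk0 : (0 : ℝ) < k := by exact_mod_cast hk
  have hkj' : (k : ℝ) + 1 ≤ j := by exact_mod_cast hkj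
  have hjn' : (n : ℝ) ^ (-(s + 1)) ≤ (j : ℝ) ^ (-(s + 1)) :=
    Real.rpow_le_rpow_of_nonpos (by linarith) (by exact_mod_cast hjn) (by linarith)
  calc s * (n : ℝ) ^ (-(s + 1)) ≤ s * (j : ℝ) ^ (-(s + 1)) * 1 := by
        rw [mul_one]; exact mul_le_mul_of_nonneg_left hjn' hs
    _ ≤ s * (j : ℝ) ^ (-(s + 1)) * (j - k) := by gcongr; linarith
    _ ≤ _ := rpow_neg_sub_rpow_neg_ge hs hk0 (by linarith)

lemma eventually_mul_rpow_lt_self (A : ℝ) {b : ℝ} (hb : b < 1) :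
    ∀ᶠ x : ℝ in atTop, A * x ^ b < x := by
  filter_upwards [(tendsto_rpow_atTop (sub_pos.2 hb)).eventually_gt_atTop A,
    eventually_gt_atTop 0] with x hA hx
  calc A * x ^ b < x ^ (1 - b) * x ^ b := by gcongr
    _ = x := by rw [← Real.rpow_add hx, sub_add_cancel, Real.rpow_one]

lemma natCast_rpow_neg_mem_Eset {s : ℝ} (hs : s ≠ 0) (k : ℕ) : (k : ℝ) ^ (-s) ∈ Eset s := by
  rcases Nat.eq_zero_or_pos k with rfl | hk
  · exact Or.inr (by simp [Real.zero_rpow (neg_ne_zero.2 hs)])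
  · exact Or.inl ⟨k, hk, rfl⟩

noncomputable def Eset.point {s : ℝ} (hs : s ≠ 0) (k : ℕ) : Eset s :=
  ⟨(k : ℝ) ^ (-s), natCast_rpow_neg_mem_Eset hs k⟩

@[simp]
lemma Eset.coe_point {s : ℝ} (hs : s ≠ 0) (k : ℕ) : (point hs k : ℝ) = (k : ℝ) ^ (-s) := rfl

lemma Eset.two_mul_lt_dist_point {s : ℝ} (hs : 0 < s) {m i j : ℕ} (hm : 1 ≤ m)
    (hi : i ∈ Finset.Icc m (2 * m)) (hj : j ∈ Finset.Icc m (2 * m)) (hij : i < j) :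
    2 * (s * (2 * m : ℝ) ^ (-(s + 1)) / 3) < dist (point hs.ne' i) (point hs.ne' j) := by
  rw [Finset.mem_Icc] at hi hj
  have hgap := natCast_rpow_neg_sub_ge hs.le (hm.trans hi.1) hij hj.2
  have hpos : 0 < s * (2 * m : ℝ) ^ (-(s + 1)) := by positivity
  push_cast at hgap
  rw [Subtype.dist_eq, Real.dist_eq, coe_point, coe_point]
  linarith [le_abs_self ((i : ℝ) ^ (-s) - (j : ℝ) ^ (-s))]

lemma Eset.point_mem_closedBall {s : ℝ} (hs : 0 < s) {m k : ℕ} (hm : 1 ≤ m) (hk : m ≤ k) :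
    point hs.ne' k ∈ closedBall (point hs.ne' m) ((m : ℝ) ^ (-s)) := by
  have hkm : (k : ℝ) ^ (-s) ≤ (m : ℝ) ^ (-s) :=
    Real.rpow_le_rpow_of_nonpos (by exact_mod_cast hm) (by exact_mod_cast hk) (by linarith)
  have hk0 : 0 ≤ (k : ℝ) ^ (-s) := by positivity
  rw [mem_closedBall, Subtype.dist_eq, Real.dist_eq, coe_point, coe_point, abs_le]
  exact ⟨by linarith, by linarith⟩

lemma Eset.succ_le_card_of_closedBall_subset {s : ℝ} (hs : 0 < s) {m : ℕ} (hm : 1 ≤ m)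
    {t : Finset (Eset s)} (ht : closedBall (point hs.ne' m) ((m : ℝ) ^ (-s)) ⊆
      ⋃ y ∈ t, closedBall y (s * (2 * m : ℝ) ^ (-(s + 1)) / 3)) :
    m + 1 ≤ t.card := by
  have hcard : (Finset.Icc m (2 * m)).card = m + 1 := by rw [Nat.card_Icc]; omega
  rw [← hcard]
  refine card_le_card_of_separated_of_mem_biUnion (p := point hs.ne') (fun i hi j hj hij => ?_)
    fun k hk => ht (point_mem_closedBall hs hm (Finset.mem_Icc.1 hk).1)
  rcases hij.lt_or_gt with h | h
  · exact two_mul_lt_dist_point hs hm hi hj h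
  · exact dist_comm (point hs.ne' i) _ ▸ two_mul_lt_dist_point hs hm hj hi h

lemma Eset.not_isAssouadExponent {s b : ℝ} (hs : 0 < s) (hb : b < 1) :
    ¬IsAssouadExponent (Eset s) b := by
  rintro ⟨C, -, hcov⟩
  set K : ℝ := 3 * 2 ^ (s + 1) / s
  have hK : 0 < K := by positivity
  obtain ⟨m, hm, hKm, hCm⟩ : ∃ m : ℕ, 1 ≤ m ∧ 1 < K * m ∧ C * K ^ b * (m : ℝ) ^ b < m := by
    have hlarge : ∀ᶠ x : ℝ in atTop, 1 < K * x ∧ C * K ^ b * x ^ b < x :=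
      ((tendsto_id.const_mul_atTop hK).eventually_gt_atTop 1).and
        (eventually_mul_rpow_lt_self _ hb)
    obtain ⟨m, hm, hm1⟩ :=
      ((tendsto_natCast_atTop_atTop.eventually hlarge).and (eventually_ge_atTop 1)).exists
    exact ⟨m, hm1, hm⟩
  have hm0 : (0 : ℝ) < m := by exact_mod_cast hm
  set R : ℝ := (m : ℝ) ^ (-s)
  set r : ℝ := s * (2 * m : ℝ) ^ (-(s + 1)) / 3
  have hr : 0 < r := by positivity
  have hratio : R / r = K * m := by
    simp only [R, r, K, Real.rpow_neg hm0.le, Real.rpow_neg (by positivity : (0 : ℝ) ≤ 2 * m),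
      Real.mul_rpow zero_le_two hm0.le, Real.rpow_add_one hm0.ne']
    field_simp
  obtain ⟨t, ht, hcard⟩ := hcov (point hs.ne' m) R r hr ((one_lt_div hr).1 (hratio ▸ hKm))
  have hcard' : (m : ℝ) + 1 ≤ C * K ^ b * (m : ℝ) ^ b :=
    calc (m : ℝ) + 1 ≤ t.card := by exact_mod_cast succ_le_card_of_closedBall_subset hs hm ht
      _ ≤ C * (R / r) ^ b := hcard
      _ = C * K ^ b * (m : ℝ) ^ b := by rw [hratio, Real.mul_rpow hK.le hm0.le, mul_assoc]
  linarith

/-- The Assouad dimension of `E_s` equals `1`, for any `s > 0`. -/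
theorem stmt_5 (s : ℝ) (hs : 0 < s) : assouadDim (Eset s) = 1 :=
  IsLeast.csInf_eq ⟨⟨one_pos, isAssouadExponent_one _⟩,
    fun _ ⟨_, hb⟩ => not_lt.1 fun hb1 => Eset.not_isAssouadExponent hs hb1 hb⟩
end

section
/- Let B^n be the closed unit ball in ℝ^n. For y ∈ B^n, a > 0, m ∈ {1,…,n}, 0 < s ≤ m, 0 < θ ≤ 1, and 0 < r < 1, define the kernel φ(u) = min{1, (r/u)^s, r^{θ(m-s)+s}/u^m}. Then ∫_{B^n} φ(|ax - y|) dx ≤ ∫_{B^n} φ(|ax|) dx, where integration is with respect to Lebesgue measure. -/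
/-!
The kernel `φ` is nonincreasing, so `x ↦ φ(|a x|)` is radially nonincreasing. By the layer-cake
formula it suffices to compare the measures of superlevel sets inside the ball. Every superlevel
set `K` of a radially nonincreasing function is a ball about the origin (possibly the whole
space), so `K` and `B^n` are nested; translating `K` (which is what replacing `x` by
`x - y / a` does) keeps its measure and can only lose mass inside `B^n`.
-/

open MeasureTheory

/-- The kernel `φ_{r,θ}^{s,m}(u) = min{1, (r/u)^s, r^{θ(m-s)+s}/u^m}`, with `φ(u) = 1`
for `u ≤ 0`. -/
noncomputable def phiKernel (r θ s : ℝ) (m : ℕ) (u : ℝ) : ℝ :=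
  if u ≤ 0 then 1
  else min 1 (min ((r / u) ^ s) (r ^ (θ * (m - s) + s) / u ^ m))

open scoped Pointwise

section PhiKernel

variable {r θ s : ℝ} {m : ℕ}

lemma phiKernel_nonneg (hr : 0 < r) (u : ℝ) : 0 ≤ phiKernel r θ s m u := by
  unfold phiKernel
  split_ifs with hu
  · exact zero_le_one
  · push Not at hu
    exact le_min zero_le_one (le_min (by positivity) (by positivity))

lemma phiKernel_le_one (u : ℝ) : phiKernel r θ s m u ≤ 1 := by
  unfold phiKernel
  split_ifs
  exacts [le_rfl, min_le_left _ _]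

lemma phiKernel_antitone (hr : 0 < r) (hs : 0 < s) : Antitone (phiKernel r θ s m) := by
  intro u v huv
  by_cases hu : u ≤ 0
  · simp only [phiKernel, if_pos hu]
    exact phiKernel_le_one v
  push Not at hu
  have hv : 0 < v := hu.trans_le huv
  simp only [phiKernel, if_neg hu.not_ge, if_neg hv.not_ge]
  gcongr

end PhiKernel

section Layercake

variable {α : Type*} [MeasurableSpace α] {μ : Measure α} {f g : α → ℝ}

theorem integral_le_integral_of_measure_lt_le (hf : 0 ≤ᵐ[μ] f) (hfm : AEMeasurable f μ)
    (hg : 0 ≤ᵐ[μ] g) (hgi : Integrable g μ)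
    (h : ∀ t, 0 < t → μ {x | t < f x} ≤ μ {x | t < g x}) :
    ∫ x, f x ∂μ ≤ ∫ x, g x ∂μ := by
  rw [integral_eq_lintegral_of_nonneg_ae hf hfm.aestronglyMeasurable,
    integral_eq_lintegral_of_nonneg_ae hg hgi.aestronglyMeasurable]
  refine ENNReal.toReal_mono hgi.lintegral_lt_top.ne ?_
  rw [lintegral_eq_lintegral_meas_lt μ hf hfm, lintegral_eq_lintegral_meas_lt μ hg hgi.aemeasurable]
  exact setLIntegral_mono' measurableSet_Ioi h

end Layercake

section NormLowerSet

variable {E : Type*}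

/-- Equivalently: empty, the whole space, or an open or closed ball about the origin. -/
def IsNormLowerSet [Norm E] (K : Set E) : Prop :=
  ∀ ⦃x⦄, x ∈ K → ∀ ⦃y⦄, ‖y‖ ≤ ‖x‖ → y ∈ K

variable [SeminormedAddCommGroup E] {K L : Set E}

lemma isNormLowerSet_closedBall (R : ℝ) : IsNormLowerSet (Metric.closedBall (0 : E) R) := by
  intro x hx y hyx
  rw [mem_closedBall_zero_iff] at hx ⊢
  exact hyx.trans hx

lemma isNormLowerSet_setOf_lt_comp_norm {h : ℝ → ℝ} (hh : Antitone h) (t : ℝ) :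
    IsNormLowerSet {x : E | t < h ‖x‖} :=
  fun _ hx _ hyx ↦ hx.trans_le (hh hyx)

lemma IsNormLowerSet.subset_or_subset (hK : IsNormLowerSet K) (hL : IsNormLowerSet L) :
    K ⊆ L ∨ L ⊆ K := by
  rw [or_iff_not_imp_left, Set.not_subset]
  rintro ⟨x, hxK, hxL⟩ y hyL
  exact hK hxK (le_of_not_ge fun hxy ↦ hxL (hL hyL hxy))

lemma IsNormLowerSet.measure_vadd_inter_le [MeasurableSpace E]
    (μ : Measure E) [μ.IsAddLeftInvariant] (hK : IsNormLowerSet K) (hL : IsNormLowerSet L)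
    (c : E) : μ ((c +ᵥ K) ∩ L) ≤ μ (K ∩ L) := by
  rcases hK.subset_or_subset hL with hKL | hLK
  · calc μ ((c +ᵥ K) ∩ L) ≤ μ (c +ᵥ K) := measure_mono Set.inter_subset_left
      _ = μ K := measure_vadd μ c K
      _ = μ (K ∩ L) := by rw [Set.inter_eq_left.mpr hKL]
  · calc μ ((c +ᵥ K) ∩ L) ≤ μ L := measure_mono Set.inter_subset_right
      _ = μ (K ∩ L) := by rw [Set.inter_eq_right.mpr hLK]

end NormLowerSet

theorem setIntegral_comp_norm_sub_le {E : Type*} [NormedAddCommGroup E] [MeasurableSpace E]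
    [BorelSpace E] (μ : Measure E) [μ.IsAddLeftInvariant] {h : ℝ → ℝ} (hh : Antitone h)
    (h_nonneg : ∀ u, 0 ≤ h u) {S : Set E} (hS : IsNormLowerSet S) (hSm : MeasurableSet S)
    (hSμ : μ S ≠ ⊤) (c : E) :
    ∫ x in S, h ‖x - c‖ ∂μ ≤ ∫ x in S, h ‖x‖ ∂μ := by
  have hm : Measurable fun x : E ↦ h ‖x‖ := hh.measurable.comp measurable_norm
  have hint : IntegrableOn (fun x ↦ h ‖x‖) S μ :=
    Measure.integrableOn_of_bounded hSμ hm.aestronglyMeasurable (M := h 0) <|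
      .of_forall fun x ↦ by
        rw [Real.norm_of_nonneg (h_nonneg _)]
        exact hh (norm_nonneg x)
  refine integral_le_integral_of_measure_lt_le (.of_forall fun _ ↦ h_nonneg _)
    (hh.measurable.comp (measurable_norm.comp (measurable_id.sub_const c))).aemeasurable
    (.of_forall fun _ ↦ h_nonneg _) hint fun t _ ↦ ?_
  have hshift : {x | t < h ‖x - c‖} = c +ᵥ {x : E | t < h ‖x‖} := by
    ext x
    simp [Set.mem_vadd_set_iff_neg_vadd_mem, neg_add_eq_sub]
  rw [Measure.restrict_apply' hSm, Measure.restrict_apply' hSm, hshift]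
  exact (isNormLowerSet_setOf_lt_comp_norm hh t).measure_vadd_inter_le μ hS c

theorem stmt_8_general (n m : ℕ) (s θ r a : ℝ)
    (hs0 : 0 < s) (hr0 : 0 < r) (ha : 0 < a)
    (y : EuclideanSpace ℝ (Fin n)) :
    ∫ x in Metric.closedBall (0 : EuclideanSpace ℝ (Fin n)) 1,
        phiKernel r θ s m ‖a • x - y‖ ≤
      ∫ x in Metric.closedBall (0 : EuclideanSpace ℝ (Fin n)) 1,
        phiKernel r θ s m ‖a • x‖ := by
  have h_anti : Antitone fun u ↦ phiKernel r θ s m (a * u) :=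
    (phiKernel_antitone hr0 hs0).comp_monotone (monotone_id.const_mul ha.le)
  have h_rescale (x : EuclideanSpace ℝ (Fin n)) : a • x - y = a • (x - a⁻¹ • y) := by
    rw [smul_sub, smul_inv_smul₀ ha.ne']
  simp only [h_rescale, norm_smul, Real.norm_of_nonneg ha.le]
  exact setIntegral_comp_norm_sub_le volume h_anti (fun _ ↦ phiKernel_nonneg hr0 _)
    (isNormLowerSet_closedBall 1) measurableSet_closedBall measure_closedBall_lt_top.ne _

/-- Symmetrisation lemma: for `y` in the closed unit ball `B^n`, `a > 0`,
`1 ≤ m ≤ n`, `0 < s ≤ m`, `0 < θ ≤ 1`, and `0 < r < 1`,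
`∫_{B^n} φ(|ax - y|) dx ≤ ∫_{B^n} φ(|ax|) dx`. -/
theorem stmt_8 (n m : ℕ) (hm1 : 1 ≤ m) (hmn : m ≤ n) (s θ r a : ℝ)
    (hs0 : 0 < s) (hsm : s ≤ m) (hθ0 : 0 < θ) (hθ1 : θ ≤ 1)
    (hr0 : 0 < r) (hr1 : r < 1) (ha : 0 < a)
    (y : EuclideanSpace ℝ (Fin n)) (hy : y ∈ Metric.closedBall (0 : EuclideanSpace ℝ (Fin n)) 1) :
    ∫ x in Metric.closedBall (0 : EuclideanSpace ℝ (Fin n)) 1,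
        phiKernel r θ s m ‖a • x - y‖ ≤
      ∫ x in Metric.closedBall (0 : EuclideanSpace ℝ (Fin n)) 1,
        phiKernel r θ s m ‖a • x‖ :=
  stmt_8_general n m s θ r a hs0 hr0 ha y
end

section
/- Let s > 1, 0 < α < 1, n ≥ 1, set f_α(u) = |u|^{-1-α}u, fix δ > 0 small and m₁ = ⌈δ^{-1/(1+sα)}⌉. Then there is a constant C depending only on n, s, α such that every point x ∈ [δ, m₁^{-sα}]^n is within distance C·δ of the set f_α({1^s, 2^s, 3^s, …}^n). That is, sup over x ∈ [δ, m₁^{-sα}]^n of dist(x, f_α(ℕ_{≥1}^s)^n) ≤ C·δ. -/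
/-!
Pull `x` back by `f_α⁻¹ = f_{1/α}`: the preimage `u` has `‖u‖ = ‖x‖^{-1/α}`, and for small `δ`
all its coordinates are at least `1`. Rounding each `uᵢ` up to the next `s`-th power moves it by
`O(‖u‖^{1-1/s})` (convexity of `t ↦ t^s`), and near `u` the map `f_α` is Lipschitz with constant
`O(‖u‖^{-1-α})`, so `x` lies within `O(‖u‖^{-α-1/s}) = O(‖x‖^{1+1/(sα)})` of `f_α(ℕ_{≥1}^s)ⁿ`.
On the cube `‖x‖ ≤ √n m₁^{-sα}`, and `m₁^{-(1+sα)} ≤ δ` by the choice of `m₁`.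
-/

/-- `f_α(u) = |u|^{-1-α} u`. -/
noncomputable def fAlpha {n : ℕ} (α : ℝ) (x : EuclideanSpace ℝ (Fin n)) :
    EuclideanSpace ℝ (Fin n) :=
  ‖x‖ ^ (-1 - α) • x

/-- The lattice set `{1^s, 2^s, 3^s, …}^n`. -/
def latticeSet (n : ℕ) (s : ℝ) : Set (EuclideanSpace ℝ (Fin n)) :=
  {x | ∀ i, ∃ m : ℕ, 1 ≤ m ∧ x i = (m : ℝ) ^ s}

open Real Set

lemma rpow_sub_rpow_le_mul_rpow_sub_one {p : ℝ} (hp : 1 ≤ p) {a b : ℝ} (hb : 0 ≤ b)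
    (hba : b ≤ a) : a ^ p - b ^ p ≤ p * a ^ (p - 1) * (a - b) := by
  rcases hba.eq_or_lt with rfl | hlt
  · simp
  have hslope := (convexOn_rpow hp).slope_le_of_hasDerivWithinAt_Iio (mem_Ici.2 hb)
    (mem_Ici.2 (hb.trans hlt.le)) hlt (hasDerivAt_rpow_const (Or.inr hp)).hasDerivWithinAt
  rwa [slope_def_field, div_le_iff₀ (sub_pos.2 hlt)] at hslope

lemma mul_rpow_neg_sub_rpow_neg_le {p : ℝ} (hp : 1 ≤ p) {a b : ℝ} (ha : 0 < a) (hab : a ≤ b) :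
    a * (a ^ (-p) - b ^ (-p)) ≤ p * (b - a) * a ^ (-p) := by
  have hb : 0 < b := ha.trans_le hab
  have key := rpow_sub_rpow_le_mul_rpow_sub_one hp ha.le hab
  rw [rpow_sub_one hb.ne'] at key
  have hA := rpow_pos_of_pos ha p
  have hB := rpow_pos_of_pos hb p
  rw [rpow_neg ha.le, rpow_neg hb.le, inv_sub_inv hA.ne' hB.ne', mul_div_assoc',
    div_le_iff₀ (by positivity)]
  calc a * (b ^ p - a ^ p) ≤ a * (p * (b ^ p / b) * (b - a)) := by gcongr
    _ = a / b * (p * (b - a) * b ^ p) := by ring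
    _ ≤ p * (b - a) * b ^ p :=
      mul_le_of_le_one_left (by have := sub_nonneg.2 hab; positivity) ((div_le_one hb).2 hab)
    _ = p * (b - a) * (a ^ p)⁻¹ * (a ^ p * b ^ p) := by field_simp

lemma exists_nat_rpow_mem_Icc {s : ℝ} (hs : 1 ≤ s) {t : ℝ} (ht : 1 ≤ t) :
    ∃ m : ℕ, 1 ≤ m ∧ t ≤ (m : ℝ) ^ s ∧ (m : ℝ) ^ s ≤ t + s * 2 ^ (s - 1) * t ^ (1 - s⁻¹) := by
  have hs0 : 0 < s := one_pos.trans_le hs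
  set r := t ^ s⁻¹
  have hr : 1 ≤ r := one_le_rpow ht (inv_nonneg.2 hs0.le)
  have hrs : r ^ s = t := rpow_inv_rpow (by linarith) hs0.ne'
  have hrm : r ≤ ⌈r⌉₊ := Nat.le_ceil r
  have hceil : (⌈r⌉₊ : ℝ) < r + 1 := Nat.ceil_lt_add_one (zero_le_one.trans hr)
  have hmr : (⌈r⌉₊ : ℝ) ≤ 2 * r := by linarith
  refine ⟨⌈r⌉₊, Nat.one_le_ceil_iff.2 (by linarith),
    hrs ▸ rpow_le_rpow (by linarith) hrm hs0.le, ?_⟩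
  have hpow : (2 * r) ^ (s - 1) = 2 ^ (s - 1) * t ^ (1 - s⁻¹) := by
    rw [mul_rpow zero_le_two (by linarith), ← rpow_mul (by linarith)]
    congr 2
    field_simp
  calc (⌈r⌉₊ : ℝ) ^ s ≤ r ^ s + s * (⌈r⌉₊ : ℝ) ^ (s - 1) * (⌈r⌉₊ - r) := by
        linarith [rpow_sub_rpow_le_mul_rpow_sub_one hs (by linarith) hrm]
    _ ≤ t + s * (2 * r) ^ (s - 1) * 1 := by
        rw [hrs]
        gcongr
        linarith
    _ = t + s * 2 ^ (s - 1) * t ^ (1 - s⁻¹) := by rw [hpow]; ring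

namespace EuclideanSpace

variable {n : ℕ}

lemma norm_le_norm_of_forall_norm_apply_le {u v : EuclideanSpace ℝ (Fin n)}
    (h : ∀ i, ‖u i‖ ≤ ‖v i‖) : ‖u‖ ≤ ‖v‖ := by
  rw [norm_eq, norm_eq]
  gcongr with i
  exact h i

lemma norm_le_sqrt_mul_of_forall_norm_apply_le {x : EuclideanSpace ℝ (Fin n)} {B : ℝ}
    (hB : 0 ≤ B) (h : ∀ i, ‖x i‖ ≤ B) : ‖x‖ ≤ √n * B := by
  rw [norm_eq, ← sqrt_sq hB, ← sqrt_mul (Nat.cast_nonneg n)]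
  gcongr
  calc ∑ i, ‖x i‖ ^ 2 ≤ ∑ _i : Fin n, B ^ 2 := by gcongr with i; exact h i
    _ = n * B ^ 2 := by simp

end EuclideanSpace

section fAlpha

variable {n : ℕ}

lemma norm_fAlpha (α : ℝ) {x : EuclideanSpace ℝ (Fin n)} (hx : x ≠ 0) :
    ‖fAlpha α x‖ = ‖x‖ ^ (-α) := by
  have hx' := norm_pos_iff.2 hx
  rw [fAlpha, norm_smul, norm_of_nonneg (rpow_nonneg hx'.le _)]
  nth_rw 2 [← rpow_one ‖x‖]
  rw [← rpow_add hx']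
  ring_nf

lemma fAlpha_fAlpha_inv {α : ℝ} (hα : α ≠ 0) {x : EuclideanSpace ℝ (Fin n)} (hx : x ≠ 0) :
    fAlpha α (fAlpha α⁻¹ x) = x := by
  have hx' := norm_pos_iff.2 hx
  rw [fAlpha, norm_fAlpha _ hx, fAlpha, smul_smul, ← rpow_mul hx'.le, ← rpow_add hx']
  convert one_smul ℝ x
  convert rpow_zero ‖x‖ using 2
  field_simp
  ring

lemma norm_fAlpha_sub_fAlpha_le {α : ℝ} (hα : 0 ≤ α) {u v : EuclideanSpace ℝ (Fin n)}
    (hu : u ≠ 0) (huv : ‖u‖ ≤ ‖v‖) :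
    ‖fAlpha α u - fAlpha α v‖ ≤ (2 + α) * ‖u - v‖ * ‖u‖ ^ (-1 - α) := by
  have hu' := norm_pos_iff.2 hu
  have hexp : -1 - α = -(1 + α) := by ring
  have hdecomp : fAlpha α u - fAlpha α v =
      (‖u‖ ^ (-1 - α) - ‖v‖ ^ (-1 - α)) • u + ‖v‖ ^ (-1 - α) • (u - v) := by
    simp only [fAlpha, sub_smul, smul_sub]
    abel
  have hmono : ‖v‖ ^ (-1 - α) ≤ ‖u‖ ^ (-1 - α) := rpow_le_rpow_of_nonpos hu' huv (by linarith)
  have hfirst :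
      ‖(‖u‖ ^ (-1 - α) - ‖v‖ ^ (-1 - α)) • u‖ ≤ (1 + α) * ‖u - v‖ * ‖u‖ ^ (-1 - α) := by
    rw [norm_smul, norm_of_nonneg (sub_nonneg.2 hmono), mul_comm, hexp]
    calc ‖u‖ * (‖u‖ ^ (-(1 + α)) - ‖v‖ ^ (-(1 + α)))
        ≤ (1 + α) * (‖v‖ - ‖u‖) * ‖u‖ ^ (-(1 + α)) :=
          mul_rpow_neg_sub_rpow_neg_le (by linarith) hu' huv
      _ ≤ (1 + α) * ‖u - v‖ * ‖u‖ ^ (-(1 + α)) := by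
          gcongr
          rw [norm_sub_rev]
          exact norm_sub_norm_le v u
  have hsecond : ‖‖v‖ ^ (-1 - α) • (u - v)‖ ≤ ‖u - v‖ * ‖u‖ ^ (-1 - α) := by
    rw [norm_smul, norm_of_nonneg (rpow_nonneg (norm_nonneg _) _), mul_comm]
    gcongr
  calc ‖fAlpha α u - fAlpha α v‖ ≤ _ := hdecomp ▸ norm_add_le _ _
    _ ≤ (1 + α) * ‖u - v‖ * ‖u‖ ^ (-1 - α) + ‖u - v‖ * ‖u‖ ^ (-1 - α) :=
        add_le_add hfirst hsecond
    _ = (2 + α) * ‖u - v‖ * ‖u‖ ^ (-1 - α) := by ring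

end fAlpha

open EuclideanSpace in
lemma exists_mem_latticeSet_norm_sub_le {n : ℕ} {s : ℝ} (hs : 1 ≤ s)
    {u : EuclideanSpace ℝ (Fin n)} (hu : ∀ i, 1 ≤ u i) :
    ∃ v ∈ latticeSet n s, ‖u‖ ≤ ‖v‖ ∧ ‖u - v‖ ≤ √n * (s * 2 ^ (s - 1) * ‖u‖ ^ (1 - s⁻¹)) := by
  choose m hm1 hum hmu using fun i ↦ exists_nat_rpow_mem_Icc hs (hu i)
  set v : EuclideanSpace ℝ (Fin n) := WithLp.toLp 2 fun i ↦ (m i : ℝ) ^ s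
  have hexp : 0 ≤ 1 - s⁻¹ := sub_nonneg.2 (inv_le_one_of_one_le₀ hs)
  refine ⟨v, fun i ↦ ⟨m i, hm1 i, rfl⟩, norm_le_norm_of_forall_norm_apply_le fun i ↦ ?_,
    norm_le_sqrt_mul_of_forall_norm_apply_le (by positivity) fun i ↦ ?_⟩
  · rw [norm_of_nonneg (by linarith [hu i]), norm_of_nonneg (by linarith [hu i, hum i])]
    exact hum i
  · have hui : u i ^ (1 - s⁻¹) ≤ ‖u‖ ^ (1 - s⁻¹) :=
      rpow_le_rpow (by linarith [hu i]) ((le_abs_self _).trans (PiLp.norm_apply_le u i)) hexp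
    rw [PiLp.sub_apply, norm_sub_rev, norm_of_nonneg (by simpa [v] using hum i)]
    have := hmu i
    simp only [v]
    nlinarith [show (0 : ℝ) ≤ s * 2 ^ (s - 1) by positivity]

lemma infDist_fAlpha_image_latticeSet_le {n : ℕ} {s α : ℝ} (hs : 1 ≤ s) (hα : 0 < α)
    {x : EuclideanSpace ℝ (Fin n)} (hx : x ≠ 0) (hx1 : ∀ i, 1 ≤ fAlpha α⁻¹ x i) :
    Metric.infDist x (fAlpha α '' latticeSet n s) ≤
      (2 + α) * √n * (s * 2 ^ (s - 1)) * ‖x‖ ^ (1 + (s * α)⁻¹) := by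
  set u := fAlpha α⁻¹ x
  have hx' := norm_pos_iff.2 hx
  have hu : u ≠ 0 := norm_pos_iff.1 (by rw [norm_fAlpha _ hx]; positivity)
  obtain ⟨v, hv, huv, hdist⟩ := exists_mem_latticeSet_norm_sub_le hs hx1
  have hpow : ‖u‖ ^ (1 - s⁻¹) * ‖u‖ ^ (-1 - α) = ‖x‖ ^ (1 + (s * α)⁻¹) := by
    rw [← rpow_add (norm_pos_iff.2 hu), norm_fAlpha _ hx, ← rpow_mul hx'.le]
    congr 1
    field_simp
    ring
  calc Metric.infDist x (fAlpha α '' latticeSet n s) ≤ dist (fAlpha α u) (fAlpha α v) := by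
        rw [fAlpha_fAlpha_inv hα.ne' hx]
        exact Metric.infDist_le_dist_of_mem (mem_image_of_mem _ hv)
    _ ≤ (2 + α) * ‖u - v‖ * ‖u‖ ^ (-1 - α) := by
        rw [dist_eq_norm]
        exact norm_fAlpha_sub_fAlpha_le hα.le hu huv
    _ ≤ (2 + α) * (√n * (s * 2 ^ (s - 1) * ‖u‖ ^ (1 - s⁻¹))) * ‖u‖ ^ (-1 - α) := by gcongr
    _ = (2 + α) * √n * (s * 2 ^ (s - 1)) * ‖x‖ ^ (1 + (s * α)⁻¹) := by rw [← hpow]; ring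

lemma exists_pos_forall_le_rpow_neg_inv {a : ℝ} (ha : 0 < a) (M : ℝ) :
    ∃ δ₀ > 0, ∀ δ, 0 < δ → δ ≤ δ₀ → M ≤ δ ^ (-1 / a) := by
  have hM : 0 < max M 1 := lt_max_of_lt_right one_pos
  refine ⟨max M 1 ^ (-a), rpow_pos_of_pos hM _, fun δ hδ hδδ₀ ↦ ?_⟩
  calc M ≤ max M 1 := le_max_left _ _
    _ = (max M 1 ^ (-a)) ^ (-1 / a) := by
        rw [← rpow_mul hM.le, show -a * (-1 / a) = 1 by field_simp, rpow_one]
    _ ≤ δ ^ (-1 / a) :=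
        rpow_le_rpow_of_nonpos hδ hδδ₀ (div_nonpos_of_nonpos_of_nonneg (by norm_num) ha.le)

lemma natCeil_rpow_neg_inv_rpow_neg_le {a δ : ℝ} (ha : 0 < a) (hδ : 0 < δ) :
    (⌈δ ^ (-1 / a)⌉₊ : ℝ) ^ (-a) ≤ δ :=
  calc (⌈δ ^ (-1 / a)⌉₊ : ℝ) ^ (-a) ≤ (δ ^ (-1 / a)) ^ (-a) :=
        rpow_le_rpow_of_nonpos (rpow_pos_of_pos hδ _) (Nat.le_ceil _) (by linarith)
    _ = δ := by rw [← rpow_mul hδ.le, show -1 / a * -a = 1 by field_simp, rpow_one]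

lemma one_le_fAlpha_inv_apply {n : ℕ} {s α b m δ : ℝ} (hα : 0 < α) (hb : 0 < b) (hm : 0 < m)
    (hbm : b ^ (1 + α⁻¹) ≤ m ^ (s - 1)) (hmδ : m ^ (-(1 + s * α)) ≤ δ)
    {x : EuclideanSpace ℝ (Fin n)} (hxb : ‖x‖ ≤ b * m ^ (-(s * α))) {i : Fin n}
    (hxi : δ ≤ x i) : 1 ≤ fAlpha α⁻¹ x i := by
  have hδx : m ^ (-(1 + s * α)) ≤ x i := hmδ.trans hxi
  have hx : 0 < ‖x‖ :=
    (rpow_pos_of_pos hm _).trans_le (hδx.trans ((le_abs_self _).trans (PiLp.norm_apply_le x i)))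
  calc (1 : ℝ) = (b ^ (1 + α⁻¹))⁻¹ * b ^ (1 + α⁻¹) := (inv_mul_cancel₀ (by positivity)).symm
    _ ≤ (b ^ (1 + α⁻¹))⁻¹ * m ^ (s - 1) := by gcongr
    _ = (b * m ^ (-(s * α))) ^ (-1 - α⁻¹) * m ^ (-(1 + s * α)) := by
        have hexp : -(s * α) * (-1 - α⁻¹) + -(1 + s * α) = s - 1 := by field_simp; ring
        rw [mul_rpow hb.le (by positivity), ← rpow_mul hm.le, mul_assoc, ← rpow_add hm, hexp,
          ← neg_add', rpow_neg hb.le]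
    _ ≤ ‖x‖ ^ (-1 - α⁻¹) * x i := by
        gcongr ?_ * ?_
        exact rpow_le_rpow_of_nonpos hx hxb (by linarith [inv_pos.2 hα])
    _ = fAlpha α⁻¹ x i := rfl

theorem stmt_16_general (n : ℕ) (hn : 1 ≤ n) (s α : ℝ) (hs : 1 < s) (hα0 : 0 < α) :
    ∃ C : ℝ, 0 < C ∧ ∃ δ₀ : ℝ, 0 < δ₀ ∧ ∀ δ : ℝ, 0 < δ → δ ≤ δ₀ →
      ∀ x : EuclideanSpace ℝ (Fin n),
        (∀ i, δ ≤ x i ∧ x i ≤ ((⌈δ ^ (-(1 : ℝ) / (1 + s * α))⌉₊ : ℝ)) ^ (-(s * α))) →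
        Metric.infDist x (fAlpha α '' latticeSet n s) ≤ C * δ := by
  have ha : 0 < 1 + s * α := by positivity
  have hb : 0 < √n := sqrt_pos.2 (by exact_mod_cast hn)
  set c := (2 + α) * √n * (s * 2 ^ (s - 1))
  -- `δ₀` makes `m₁ ^ (s - 1) ≥ √n ^ (1 + α⁻¹)`, which puts `f_α⁻¹` of the cube into `[1, ∞)ⁿ`.
  obtain ⟨δ₀, hδ₀, hδ₀M⟩ := exists_pos_forall_le_rpow_neg_inv ha (√n ^ ((1 + α⁻¹) / (s - 1)))
  refine ⟨c * √n ^ (1 + (s * α)⁻¹), by positivity, δ₀, hδ₀, fun δ hδ hδδ₀ x hx ↦ ?_⟩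
  set m : ℝ := (⌈δ ^ (-(1 : ℝ) / (1 + s * α))⌉₊ : ℝ)
  have hmδ : m ^ (-(1 + s * α)) ≤ δ := natCeil_rpow_neg_inv_rpow_neg_le ha hδ
  have hm : 0 < m := Nat.cast_pos.2 (Nat.ceil_pos.2 (rpow_pos_of_pos hδ _))
  have hbm : √n ^ (1 + α⁻¹) ≤ m ^ (s - 1) := by
    calc √n ^ (1 + α⁻¹) = (√n ^ ((1 + α⁻¹) / (s - 1))) ^ (s - 1) := by
          rw [← rpow_mul hb.le, div_mul_cancel₀ _ (by linarith)]
      _ ≤ m ^ (s - 1) := by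
          gcongr
          exact (hδ₀M δ hδ hδδ₀).trans (Nat.le_ceil _)
  have hx0 : ∀ i, 0 < x i := fun i ↦ hδ.trans_le (hx i).1
  have hxb : ‖x‖ ≤ √n * m ^ (-(s * α)) :=
    EuclideanSpace.norm_le_sqrt_mul_of_forall_norm_apply_le (by positivity) fun i ↦ by
      rw [norm_of_nonneg (hx0 i).le]; exact (hx i).2
  calc Metric.infDist x (fAlpha α '' latticeSet n s) ≤ c * ‖x‖ ^ (1 + (s * α)⁻¹) :=
        infDist_fAlpha_image_latticeSet_le hs.le hα0 (fun h ↦ (hx0 ⟨0, hn⟩).ne' (by simp [h]))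
          fun i ↦ one_le_fAlpha_inv_apply hα0 hb hm hbm hmδ hxb (hx i).1
    _ ≤ c * (√n * m ^ (-(s * α))) ^ (1 + (s * α)⁻¹) := by gcongr
    _ = c * √n ^ (1 + (s * α)⁻¹) * m ^ (-(1 + s * α)) := by
        have hexp : -(s * α) * (1 + (s * α)⁻¹) = -(1 + s * α) := by field_simp; ring
        rw [mul_rpow hb.le (by positivity), ← rpow_mul hm.le, hexp, ← mul_assoc]
    _ ≤ c * √n ^ (1 + (s * α)⁻¹) * δ := by gcongr

/-- For `s > 1`, `0 < α < 1`, there are `C > 0` and `δ₀ > 0` so that for all `0 < δ ≤ δ₀`,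
setting `m₁ = ⌈δ^{-1/(1+sα)}⌉`, every point of the cube `[δ, m₁^{-sα}]^n` lies within
distance `C·δ` of `f_α({1^s, 2^s, …}^n)`. -/
theorem stmt_16 (n : ℕ) (hn : 1 ≤ n) (s α : ℝ) (hs : 1 < s) (hα0 : 0 < α) (hα1 : α < 1) :
    ∃ C : ℝ, 0 < C ∧ ∃ δ₀ : ℝ, 0 < δ₀ ∧ ∀ δ : ℝ, 0 < δ → δ ≤ δ₀ →
      ∀ x : EuclideanSpace ℝ (Fin n),
        (∀ i, δ ≤ x i ∧ x i ≤ ((⌈δ ^ (-(1 : ℝ) / (1 + s * α))⌉₊ : ℝ)) ^ (-(s * α))) →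
        Metric.infDist x (fAlpha α '' latticeSet n s) ≤ C * δ :=
  stmt_16_general n hn s α hs hα0
end
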